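/- Exact kinetic energy conservation of the discrete-gradient-dependent integrator: suppose V^n, V^{n+1} ∈ (ℝ³)^N satisfy the DGDI update. Then the kinetic energy K(V) = (1/2) Σ_{p=1}^N m w_p ‖v_p‖² is exactly conserved: K(V^{n+1}) = K(V^n). -/

import Mathlib

open Matrix
open scoped RealInnerProductSpace

/-- The Landau collision kernel `Q(ξ) = (1/‖ξ‖)(I − ξξᵀ/‖ξ‖²)` on ℝ³. -/
noncomputable def landauQ (ξ : EuclideanSpace ℝ (Fin 3)) : Matrix (Fin 3) (Fin 3) ℝ :=
  ‖ξ‖⁻¹ • ((1 : Matrix (Fin 3) (Fin 3) ℝ) - (‖ξ‖ ^ 2)⁻¹ • Matrix.vecMulVec ξ ξ)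

/-- Reinterpret a plain vector in `ℝ³` as a point of Euclidean space. -/
noncomputable def toE3 (v : Fin 3 → ℝ) : EuclideanSpace ℝ (Fin 3) :=
  (WithLp.equiv 2 (Fin 3 → ℝ)).symm v

/-- Partial gradient of `F : (ℝ³)^N → ℝ` with respect to the velocity `v_p`. -/
noncomputable def gradVp {N : ℕ} (F : (Fin N → EuclideanSpace ℝ (Fin 3)) → ℝ)
    (V : Fin N → EuclideanSpace ℝ (Fin 3)) (p : Fin N) : EuclideanSpace ℝ (Fin 3) :=
  gradient (fun ξ => F (Function.update V p ξ)) (V p)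

/-- The `p`-th `ℝ³` block of the average discrete gradient
`∇̄F(Vⁿ,Vⁿ⁺¹) = ∫₀¹ ∇F((1−t)Vⁿ + t Vⁿ⁺¹) dt`. -/
noncomputable def bGrad {N : ℕ} (F : (Fin N → EuclideanSpace ℝ (Fin 3)) → ℝ)
    (V0 V1 : Fin N → EuclideanSpace ℝ (Fin 3)) (p : Fin N) : EuclideanSpace ℝ (Fin 3) :=
  ∫ t in (0:ℝ)..1, gradVp F ((1 - t) • V0 + t • V1) p

/-- `Γ̄(F,p,p̄) = (1/(m w_p)) (∇̄F)_p − (1/(m w_p̄)) (∇̄F)_p̄`. -/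
noncomputable def bGamma {N : ℕ} (m : ℝ) (w : Fin N → ℝ)
    (F : (Fin N → EuclideanSpace ℝ (Fin 3)) → ℝ)
    (V0 V1 : Fin N → EuclideanSpace ℝ (Fin 3)) (p q : Fin N) : EuclideanSpace ℝ (Fin 3) :=
  (1 / (m * w p)) • bGrad F V0 V1 p - (1 / (m * w q)) • bGrad F V0 V1 q

/-- The kinetic energy `K(V) = ½ Σ_p m w_p ‖v_p‖²`. -/
noncomputable def kinE {N : ℕ} (m : ℝ) (w : Fin N → ℝ)
    (V : Fin N → EuclideanSpace ℝ (Fin 3)) : ℝ :=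
  (1 / 2) * ∑ p, m * w p * ‖V p‖ ^ 2

/-- The discrete-gradient-dependent integrator (DGDI) update:
`v_pⁿ⁺¹ = v_pⁿ + Δt (ν/m) Σ_p̄ w_p̄ 𝟙(p,p̄) Q(Γ̄(K,p,p̄)) Γ̄(S,p,p̄)` for every `p`. -/
def DGDIUpdate {N : ℕ} (m ν Δt : ℝ) (w : Fin N → ℝ) (ind : Fin N → Fin N → ℝ)
    (S : (Fin N → EuclideanSpace ℝ (Fin 3)) → ℝ)
    (V0 V1 : Fin N → EuclideanSpace ℝ (Fin 3)) : Prop :=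
  ∀ p, V1 p = V0 p + (Δt * (ν / m)) •
    ∑ q, (w q * ind p q) •
      toE3 ((landauQ (bGamma m w (kinE m w) V0 V1 p q)).mulVec (bGamma m w S V0 V1 p q))

/- ### Auxiliary lemmas -/

lemma aux_hasGradient (c C : ℝ) (x : EuclideanSpace ℝ (Fin 3)) :
    HasGradientAt (fun ξ : EuclideanSpace ℝ (Fin 3) => c * ‖ξ‖ ^ 2 + C) ((2 * c) • x) x := by
  rw [hasGradientAt_iff_hasFDerivAt]
  have h := ((hasFDerivAt_id x).norm_sq.const_mul c).add_const C
  refine h.congr_fderiv ?_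
  ext y
  simp [InnerProductSpace.toDual_apply_apply, real_inner_smul_left, two_smul]
  ring

lemma aux_gradVp_kinE {N : ℕ} (m : ℝ) (w : Fin N → ℝ)
    (V : Fin N → EuclideanSpace ℝ (Fin 3)) (p : Fin N) :
    gradVp (kinE m w) V p = (m * w p) • V p := by
  have hfun : (fun ξ => kinE m w (Function.update V p ξ))
      = fun ξ : EuclideanSpace ℝ (Fin 3) => (m * w p / 2) * ‖ξ‖ ^ 2
        + (1/2) * ∑ r ∈ Finset.univ.erase p, m * w r * ‖V r‖ ^ 2 := by
    funext ξ
    unfold kinE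
    rw [← Finset.add_sum_erase _ _ (Finset.mem_univ p)]
    simp only [Function.update_self]
    rw [Finset.sum_congr rfl (fun r hr => by
      rw [Function.update_of_ne (Finset.ne_of_mem_erase hr)])]
    ring
  unfold gradVp
  rw [hfun]
  have := (aux_hasGradient (m * w p / 2) ((1/2) * ∑ r ∈ Finset.univ.erase p,
    m * w r * ‖V r‖ ^ 2) (V p)).gradient
  rw [this]
  congr 1
  ring

lemma aux_integral (c : ℝ) (a b : EuclideanSpace ℝ (Fin 3)) :
    ∫ t in (0:ℝ)..1, c • ((1 - t) • a + t • b) = (c / 2) • (a + b) := by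
  have h1 : ∀ t : ℝ, c • ((1 - t) • a + t • b) = (c * (1 - t)) • a + (c * t) • b := by
    intro t; rw [smul_add, smul_smul, smul_smul]
  have hid : (∫ t in (0:ℝ)..1, c * t) = c / 2 := by
    rw [intervalIntegral.integral_const_mul, integral_id]; ring
  have hc1 : (∫ t in (0:ℝ)..1, c * (1 - t)) = c / 2 := by
    rw [intervalIntegral.integral_const_mul]
    rw [intervalIntegral.integral_sub intervalIntegrable_const
      (intervalIntegral.intervalIntegrable_id), integral_id]
    simp; ring
  simp only [h1]
  rw [intervalIntegral.integral_add
    ((by fun_prop : Continuous fun t : ℝ => (c * (1 - t)) • a).intervalIntegrable 0 1)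
    ((by fun_prop : Continuous fun t : ℝ => (c * t) • b).intervalIntegrable 0 1),
    intervalIntegral.integral_smul_const, intervalIntegral.integral_smul_const, hid, hc1,
    ← smul_add]

lemma aux_bGrad_kinE {N : ℕ} (m : ℝ) (w : Fin N → ℝ)
    (V0 V1 : Fin N → EuclideanSpace ℝ (Fin 3)) (p : Fin N) :
    bGrad (kinE m w) V0 V1 p = (m * w p / 2) • (V0 p + V1 p) := by
  unfold bGrad
  have h : ∀ t : ℝ, gradVp (kinE m w) ((1 - t) • V0 + t • V1) p
      = (m * w p) • ((1 - t) • V0 p + t • V1 p) := by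
    intro t
    rw [aux_gradVp_kinE]
    simp
  simp only [h]
  exact aux_integral (m * w p) (V0 p) (V1 p)

lemma aux_bGamma_kinE {N : ℕ} (m : ℝ) (hm : m ≠ 0) (w : Fin N → ℝ) (hw : ∀ p, w p ≠ 0)
    (V0 V1 : Fin N → EuclideanSpace ℝ (Fin 3)) (p q : Fin N) :
    bGamma m w (kinE m w) V0 V1 p q
      = ((1:ℝ)/2) • ((V0 p + V1 p) - (V0 q + V1 q)) := by
  unfold bGamma
  rw [aux_bGrad_kinE, aux_bGrad_kinE, smul_smul, smul_smul, smul_sub]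
  have hp : 1 / (m * w p) * (m * w p / 2) = 1/2 := by
    field_simp
    exact div_self (by simp [hm, hw p])
  have hq : 1 / (m * w q) * (m * w q / 2) = 1/2 := by
    field_simp
    exact div_self (by simp [hm, hw q])
  rw [hp, hq]

lemma aux_orth (x : EuclideanSpace ℝ (Fin 3)) (y : Fin 3 → ℝ) :
    ⟪x, toE3 ((landauQ x).mulVec y)⟫ = 0 := by
  have hdot : x 0 * x 0 + x 1 * x 1 + x 2 * x 2 = ‖x‖ ^ 2 := by
    rw [EuclideanSpace.norm_eq, Real.sq_sqrt (by positivity)]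
    simp [Fin.sum_univ_three, sq]
  have hx : ⟪x, toE3 ((landauQ x).mulVec y)⟫
      = ‖x‖⁻¹ * ((x 0 * y 0 + x 1 * y 1 + x 2 * y 2)
        * (1 - (‖x‖^2)⁻¹ * (x 0 * x 0 + x 1 * x 1 + x 2 * x 2))) := by
    simp only [landauQ, toE3, PiLp.inner_apply, RCLike.inner_apply, conj_trivial]
    simp only [Matrix.smul_mulVec, Matrix.sub_mulVec, Matrix.one_mulVec]
    simp only [WithLp.equiv_symm_apply, WithLp.ofLp_toLp, Pi.smul_apply, Pi.sub_apply, smul_eq_mul]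
    simp only [Matrix.mulVec, Matrix.vecMulVec_apply, dotProduct, Fin.sum_univ_three]
    ring
  rw [hx, hdot]
  rcases eq_or_ne x 0 with h | h
  · simp [h]
  · rw [inv_mul_cancel₀ (pow_ne_zero 2 (norm_ne_zero_iff.mpr h))]
    simp

lemma aux_landauQ_neg (ξ : EuclideanSpace ℝ (Fin 3)) : landauQ (-ξ) = landauQ ξ := by
  unfold landauQ
  rw [norm_neg]
  congr 2
  ext i j
  simp [Matrix.vecMulVec_apply]

lemma aux_toE3_neg (v : Fin 3 → ℝ) : toE3 (-v) = -toE3 v := rfl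

lemma aux_mulVec_neg (M : Matrix (Fin 3) (Fin 3) ℝ) (v : EuclideanSpace ℝ (Fin 3)) :
    toE3 (M.mulVec (-v)) = -toE3 (M.mulVec v) := by
  have h : M.mulVec (-v : EuclideanSpace ℝ (Fin 3)) = -(M.mulVec v) := by
    funext i
    simp [Matrix.mulVec, dotProduct, mul_neg, Finset.sum_neg_distrib]
  rw [WithLp.ofLp_neg] at h
  rw [h, aux_toE3_neg]

lemma aux_bGamma_antisymm {N : ℕ} (m : ℝ) (w : Fin N → ℝ)
    (F : (Fin N → EuclideanSpace ℝ (Fin 3)) → ℝ)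
    (V0 V1 : Fin N → EuclideanSpace ℝ (Fin 3)) (p q : Fin N) :
    bGamma m w F V0 V1 q p = -bGamma m w F V0 V1 p q := by
  unfold bGamma; rw [neg_sub]

noncomputable def auxT {N : ℕ} (m : ℝ) (w : Fin N → ℝ)
    (S : (Fin N → EuclideanSpace ℝ (Fin 3)) → ℝ)
    (V0 V1 : Fin N → EuclideanSpace ℝ (Fin 3)) (p q : Fin N) : EuclideanSpace ℝ (Fin 3) :=
  toE3 ((landauQ (bGamma m w (kinE m w) V0 V1 p q)).mulVec (bGamma m w S V0 V1 p q))

lemma auxT_antisymm {N : ℕ} (m : ℝ) (w : Fin N → ℝ)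
    (S : (Fin N → EuclideanSpace ℝ (Fin 3)) → ℝ)
    (V0 V1 : Fin N → EuclideanSpace ℝ (Fin 3)) (p q : Fin N) :
    auxT m w S V0 V1 q p = -auxT m w S V0 V1 p q := by
  unfold auxT
  rw [aux_bGamma_antisymm m w (kinE m w), aux_landauQ_neg, aux_bGamma_antisymm m w S]
  exact aux_mulVec_neg _ _

lemma auxT_orth {N : ℕ} (m : ℝ) (hm : m ≠ 0) (w : Fin N → ℝ) (hw : ∀ p, w p ≠ 0)
    (S : (Fin N → EuclideanSpace ℝ (Fin 3)) → ℝ)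
    (V0 V1 : Fin N → EuclideanSpace ℝ (Fin 3)) (p q : Fin N) :
    ⟪(V0 p + V1 p) - (V0 q + V1 q), auxT m w S V0 V1 p q⟫ = 0 := by
  have h1 : ⟪((1:ℝ)/2) • ((V0 p + V1 p) - (V0 q + V1 q)), auxT m w S V0 V1 p q⟫ = 0 := by
    unfold auxT
    rw [← aux_bGamma_kinE m hm w hw V0 V1 p q]
    exact aux_orth _ _
  rw [real_inner_smul_left] at h1
  have h2 : ((1:ℝ)/2) ≠ 0 := by norm_num
  exact (mul_eq_zero.mp h1).resolve_left h2

/-- Exact kinetic energy conservation of the discrete-gradient-dependent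
integrator: under the DGDI update, `K(Vⁿ⁺¹) = K(Vⁿ)`. -/
theorem DGDI_kineticEnergy_conservation
(N : ℕ) (hN : 1 ≤ N) (m : ℝ) (hm : 0 < m)
    (w : Fin N → ℝ) (hw : ∀ p, 0 < w p) (ν : ℝ) (hν : 0 ≤ ν) (Δt : ℝ) (hΔt : 0 ≤ Δt)
    (ind : Fin N → Fin N → ℝ) (hind01 : ∀ p q, ind p q = 0 ∨ ind p q = 1)
    (hindsymm : ∀ p q, ind p q = ind q p) (hinddiag : ∀ p, ind p p = 0)
    (S : (Fin N → EuclideanSpace ℝ (Fin 3)) → ℝ) (hS : ContDiff ℝ 1 S)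
    (V0 V1 : Fin N → EuclideanSpace ℝ (Fin 3))
    (hK : ∀ p q, ind p q = 1 → bGamma m w (kinE m w) V0 V1 p q ≠ 0)
    (hupd : DGDIUpdate m ν Δt w ind S V0 V1) :
    kinE m w V1 = kinE m w V0 := by
  have hm' : m ≠ 0 := hm.ne'
  have hw' : ∀ p, w p ≠ 0 := fun p => (hw p).ne'
  have hpair : ∀ p q : Fin N,
      (w p * w q * ind p q) * ⟪V0 p + V1 p, auxT m w S V0 V1 p q⟫
      + (w q * w p * ind q p) * ⟪V0 q + V1 q, auxT m w S V0 V1 q p⟫ = 0 := by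
    intro p q
    rw [auxT_antisymm m w S V0 V1 p q, hindsymm q p, inner_neg_right]
    have h1 : w p * w q * ind p q * ⟪V0 p + V1 p, auxT m w S V0 V1 p q⟫
        + w q * w p * ind p q * -⟪V0 q + V1 q, auxT m w S V0 V1 p q⟫
        = (w p * w q * ind p q)
          * ⟪(V0 p + V1 p) - (V0 q + V1 q), auxT m w S V0 V1 p q⟫ := by
      rw [inner_sub_left]; ring
    rw [h1, auxT_orth m hm' w hw' S V0 V1 p q, mul_zero]
  have hsum : (∑ p, ∑ q, (w p * w q * ind p q) * ⟪V0 p + V1 p, auxT m w S V0 V1 p q⟫) = 0 := by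
    have h2 : (∑ p, ∑ q, (w p * w q * ind p q) * ⟪V0 p + V1 p, auxT m w S V0 V1 p q⟫)
        + (∑ p, ∑ q, (w p * w q * ind p q) * ⟪V0 p + V1 p, auxT m w S V0 V1 p q⟫) = 0 := by
      nth_rewrite 2 [Finset.sum_comm]
      rw [← Finset.sum_add_distrib]
      simp only [← Finset.sum_add_distrib]
      exact Finset.sum_eq_zero fun p _ => Finset.sum_eq_zero fun q _ => hpair p q
    linarith
  have hsub : ∀ p, V1 p - V0 p = (Δt * (ν / m)) • ∑ q, (w q * ind p q) • auxT m w S V0 V1 p q := by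
    intro p
    rw [hupd p]
    exact add_sub_cancel_left _ _
  have hdiff : kinE m w V1 - kinE m w V0
      = ((1/2) * m * (Δt * (ν / m)))
        * ∑ p, ∑ q, (w p * w q * ind p q) * ⟪V0 p + V1 p, auxT m w S V0 V1 p q⟫ := by
    unfold kinE
    rw [← mul_sub, ← Finset.sum_sub_distrib, Finset.mul_sum, Finset.mul_sum]
    refine Finset.sum_congr rfl fun p _ => ?_
    have hnorm : m * w p * ‖V1 p‖ ^ 2 - m * w p * ‖V0 p‖ ^ 2
        = m * w p * ⟪V0 p + V1 p, V1 p - V0 p⟫ := by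
      rw [inner_sub_right, inner_add_left, inner_add_left,
        real_inner_self_eq_norm_sq, real_inner_self_eq_norm_sq,
        real_inner_comm (V0 p) (V1 p)]
      ring
    rw [hnorm, hsub p, real_inner_smul_right, inner_sum]
    simp only [real_inner_smul_right, Finset.mul_sum]
    refine Finset.sum_congr rfl fun q _ => ?_
    ring
  rw [hsum, mul_zero] at hdiff
  linarith
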